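/- Let e be a vital edge and C(e) any mincut for e. Then e is the only possible loose edge among the contributing edges of C(e); that is, every contributing edge of C(e) other than e is saturated in some maximum (s,t)-flow. -/

import Mathlib

open Finset

variable {V : Type*} [Fintype V] [DecidableEq V]

/-- capacity of the cut given by the source-side vertex set `C`:
total capacity of edges with tail in `C` and head outside `C`. -/
noncomputable def cutCap (E : Finset (V × V)) (w : V × V → ℝ) (C : Finset V) : ℝ :=
  ∑ e ∈ E.filter (fun e => e.1 ∈ C ∧ e.2 ∉ C), w e

/-- `C` is an (s,t)-cut. -/
def IsCut (s t : V) (C : Finset V) : Prop := s ∈ C ∧ t ∉ C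

/-- edge `e` is a contributing (outgoing) edge of the cut `C`. -/
def Contributes (e : V × V) (C : Finset V) : Prop := e.1 ∈ C ∧ e.2 ∉ C

/-- `f` is a feasible (s,t)-flow on edge set `E` with capacities `w`. -/
structure IsFlow (E : Finset (V × V)) (w : V × V → ℝ) (s t : V) (f : V × V → ℝ) : Prop where
  nonneg : ∀ e ∈ E, 0 ≤ f e
  le_cap : ∀ e ∈ E, f e ≤ w e
  support : ∀ e, e ∉ E → f e = 0
  conserve : ∀ v, v ≠ s → v ≠ t →
    ∑ e ∈ E.filter (fun e => e.1 = v), f e = ∑ e ∈ E.filter (fun e => e.2 = v), f e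

/-- value of an (s,t)-flow: the net flow out of `s`. -/
noncomputable def flowValue (E : Finset (V × V)) (s : V) (f : V × V → ℝ) : ℝ :=
  ∑ e ∈ E.filter (fun e => e.1 = s), f e - ∑ e ∈ E.filter (fun e => e.2 = s), f e

/-- `f` is a maximum (s,t)-flow. -/
def IsMaxFlow (E : Finset (V × V)) (w : V × V → ℝ) (s t : V) (f : V × V → ℝ) : Prop :=
  IsFlow E w s t f ∧ ∀ g, IsFlow E w s t g → flowValue E s g ≤ flowValue E s f

/-- capacity of a minimum (s,t)-cut. -/
noncomputable def minCutCap (E : Finset (V × V)) (w : V × V → ℝ) (s t : V) : ℝ :=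
  sInf {x | ∃ C : Finset V, IsCut s t C ∧ cutCap E w C = x}

/-- `e` is a vital edge: deleting it strictly decreases the min (s,t)-cut capacity. -/
def Vital (E : Finset (V × V)) (w : V × V → ℝ) (s t : V) (e : V × V) : Prop :=
  e ∈ E ∧ minCutCap (E.erase e) w s t < minCutCap E w s t

/-- `C` is a mincut for the edge `e`: a least-capacity (s,t)-cut in which `e` contributes. -/
def IsMincutFor (E : Finset (V × V)) (w : V × V → ℝ) (s t : V) (e : V × V)
    (C : Finset V) : Prop :=
  IsCut s t C ∧ Contributes e C ∧
    ∀ C', IsCut s t C' → Contributes e C' → cutCap E w C ≤ cutCap E w C'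

/-- total flow on edges leaving the cut `C`. -/
noncomputable def flowOut (E : Finset (V × V)) (f : V × V → ℝ) (C : Finset V) : ℝ :=
  ∑ e ∈ E.filter (fun e => e.1 ∈ C ∧ e.2 ∉ C), f e

/-- total flow on edges entering the cut `C`. -/
noncomputable def flowIn (E : Finset (V × V)) (f : V × V → ℝ) (C : Finset V) : ℝ :=
  ∑ e ∈ E.filter (fun e => e.1 ∉ C ∧ e.2 ∈ C), f e

/-!
Let `M` be the minimum cut capacity and lower the capacity of `e` by the excess
`cutCap C - M`. Vitality of `e` gives `cutCap C - w e < M`: a minimum cut of `E.erase e` must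
still be a cut in which `e` contributes, and `C` is cheapest among those. So the lowered
capacity stays nonnegative, every cut still costs at least `M`, and `C` now costs exactly `M`.
By max-flow/min-cut for the lowered capacities (a maximum flow exists by compactness, and the
residual reachable set of a maximum flow is a cut it saturates) some flow has value `M` there.
It is a maximum flow for `w` and saturates every edge leaving `C`; the edges other than `e`
kept their capacity.
-/

section Network

omit [Fintype V]

instance (e : V × V) (C : Finset V) : Decidable (Contributes e C) :=
  inferInstanceAs (Decidable (_ ∧ _))

noncomputable def netOut (E : Finset (V × V)) (f : V × V → ℝ) (v : V) : ℝ :=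
  ∑ e ∈ E.filter (fun e => e.1 = v), f e - ∑ e ∈ E.filter (fun e => e.2 = v), f e

variable {E : Finset (V × V)} {w : V × V → ℝ} {s t : V} {f : V × V → ℝ}

lemma netOut_add (E : Finset (V × V)) (f g : V × V → ℝ) (v : V) :
    netOut E (f + g) v = netOut E f v + netOut E g v := by
  simp only [netOut, Pi.add_apply, Finset.sum_add_distrib]
  ring

lemma netOut_smul (E : Finset (V × V)) (c : ℝ) (f : V × V → ℝ) (v : V) :
    netOut E (c • f) v = c * netOut E f v := by
  simp only [netOut, Pi.smul_apply, smul_eq_mul, ← Finset.mul_sum]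
  ring

lemma netOut_single {E : Finset (V × V)} {a b : V} (hab : (a, b) ∈ E) (v : V) :
    netOut E (Pi.single (a, b) 1) v = (if a = v then 1 else 0) - (if b = v then 1 else 0) := by
  simp [netOut, Finset.sum_pi_single', hab]

lemma sum_netOut (E : Finset (V × V)) (f : V × V → ℝ) (C : Finset V) :
    ∑ v ∈ C, netOut E f v = flowOut E f C - flowIn E f C := by
  have sum_filter_mem : ∀ p : V × V → V,
      ∑ v ∈ C, ∑ e ∈ E.filter (fun e => p e = v), f e = ∑ e ∈ E, if p e ∈ C then f e else 0 := by
    intro p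
    simp only [Finset.sum_filter]
    rw [Finset.sum_comm]
    exact Finset.sum_congr rfl fun e _ => Finset.sum_ite_eq C (p e) _
  unfold netOut
  rw [Finset.sum_sub_distrib, sum_filter_mem, sum_filter_mem, flowOut, flowIn,
    Finset.sum_filter, Finset.sum_filter, ← Finset.sum_sub_distrib, ← Finset.sum_sub_distrib]
  refine Finset.sum_congr rfl fun e _ => ?_
  by_cases h1 : e.1 ∈ C <;> by_cases h2 : e.2 ∈ C <;> simp [h1, h2]

lemma IsFlow.netOut_eq_zero (hf : IsFlow E w s t f) {v : V} (hs : v ≠ s) (ht : v ≠ t) :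
    netOut E f v = 0 :=
  sub_eq_zero.2 (hf.conserve v hs ht)

lemma IsFlow.flowValue_eq (hf : IsFlow E w s t f) {C : Finset V} (hC : IsCut s t C) :
    flowValue E s f = flowOut E f C - flowIn E f C := by
  rw [← sum_netOut, Finset.sum_eq_single_of_mem s hC.1 fun v hv hvs =>
    hf.netOut_eq_zero hvs fun hvt => hC.2 (hvt ▸ hv)]
  rfl

lemma IsFlow.flowValue_le_cutCap (hf : IsFlow E w s t f) {C : Finset V} (hC : IsCut s t C) :
    flowValue E s f ≤ cutCap E w C := by
  have hout : flowOut E f C ≤ cutCap E w C :=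
    Finset.sum_le_sum fun e he => hf.le_cap e (Finset.mem_filter.1 he).1
  have hin : 0 ≤ flowIn E f C :=
    Finset.sum_nonneg fun e he => hf.nonneg e (Finset.mem_filter.1 he).1
  linarith [hf.flowValue_eq hC]

lemma IsFlow.flowValue_eq_cutCap_iff (hf : IsFlow E w s t f) {C : Finset V} (hC : IsCut s t C) :
    flowValue E s f = cutCap E w C ↔
      (∀ e ∈ E, Contributes e C → f e = w e) ∧ (∀ e ∈ E, e.1 ∉ C → e.2 ∈ C → f e = 0) := by
  have hslack : ∀ e ∈ E.filter (fun e => e.1 ∈ C ∧ e.2 ∉ C), 0 ≤ w e - f e :=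
    fun e he => sub_nonneg.2 (hf.le_cap e (Finset.mem_filter.1 he).1)
  have hnonneg : ∀ e ∈ E.filter (fun e => e.1 ∉ C ∧ e.2 ∈ C), 0 ≤ f e :=
    fun e he => hf.nonneg e (Finset.mem_filter.1 he).1
  have hcut : cutCap E w C - flowValue E s f =
      ∑ e ∈ E.filter (fun e => e.1 ∈ C ∧ e.2 ∉ C), (w e - f e) + flowIn E f C := by
    rw [hf.flowValue_eq hC, Finset.sum_sub_distrib, cutCap, flowOut]
    ring
  rw [eq_comm, ← sub_eq_zero, hcut, flowIn,
    add_eq_zero_iff_of_nonneg (Finset.sum_nonneg hslack) (Finset.sum_nonneg hnonneg),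
    Finset.sum_eq_zero_iff_of_nonneg hslack, Finset.sum_eq_zero_iff_of_nonneg hnonneg]
  simp only [Finset.mem_filter, sub_eq_zero, and_imp, Contributes, eq_comm (a := w _)]

lemma IsFlow.mono (hf : IsFlow E w s t f) {w' : V × V → ℝ} (hw : ∀ e ∈ E, w e ≤ w' e) :
    IsFlow E w' s t f :=
  ⟨hf.nonneg, fun e he => (hf.le_cap e he).trans (hw e he), hf.support, hf.conserve⟩

lemma mem_filter_contributes {e : V × V} {C : Finset V} :
    e ∈ E.filter (fun e => e.1 ∈ C ∧ e.2 ∉ C) ↔ e ∈ E ∧ Contributes e C :=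
  Finset.mem_filter

lemma cutCap_update {e : V × V} (he : e ∈ E) (x : ℝ) (C : Finset V) :
    cutCap E (Function.update w e x) C = cutCap E w C + if Contributes e C then x - w e else 0 := by
  unfold cutCap
  split_ifs with hc
  · have hmem : e ∈ E.filter (fun e => e.1 ∈ C ∧ e.2 ∉ C) := mem_filter_contributes.2 ⟨he, hc⟩
    rw [Finset.sum_update_of_mem hmem, Finset.sum_eq_add_sum_sdiff_singleton_of_mem hmem w]
    ring
  · rw [Finset.sum_update_of_notMem (mt mem_filter_contributes.1 (hc ·.2)), add_zero]

lemma cutCap_erase {e : V × V} (he : e ∈ E) (C : Finset V) :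
    cutCap (E.erase e) w C = cutCap E w C - if Contributes e C then w e else 0 := by
  unfold cutCap
  rw [Finset.filter_erase]
  split_ifs with hc
  · exact Finset.sum_erase_eq_sub (mem_filter_contributes.2 ⟨he, hc⟩)
  · rw [Finset.erase_eq_of_notMem (mt mem_filter_contributes.1 (hc ·.2)), sub_zero]

def Residual (E : Finset (V × V)) (w f : V × V → ℝ) (a b : V) : Prop :=
  ((a, b) ∈ E ∧ f (a, b) < w (a, b)) ∨ ((b, a) ∈ E ∧ 0 < f (b, a))

/-- Count each edge `+1` per forward and `-1` per backward use along a residual walk: the total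
only increases edges with slack and only decreases edges carrying flow, even when the walk reuses
an edge. -/
lemma exists_augmentingDirection {a : V} (hr : Relation.ReflTransGen (Residual E w f) a t) :
    ∃ h : V × V → ℝ, (∀ e, 0 < h e → e ∈ E ∧ f e < w e) ∧ (∀ e, h e < 0 → e ∈ E ∧ 0 < f e) ∧
      ∀ v, netOut E h v = (if a = v then 1 else 0) - (if t = v then 1 else 0) := by
  induction hr using Relation.ReflTransGen.head_induction_on with
  | refl => exact ⟨0, by simp, by simp, fun v => by simp [netOut]⟩
  | @head a c hac _ ih =>
    obtain ⟨h, hpos, hneg, hdiv⟩ := ih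
    rcases hac with ⟨hmem, hslack⟩ | ⟨hmem, hflow⟩
    · refine ⟨h + Pi.single (a, c) 1, fun e he => ?_, fun e he => ?_, fun v => ?_⟩
      · by_cases hea : e = (a, c)
        · exact hea ▸ ⟨hmem, hslack⟩
        · exact hpos e (by simpa [hea] using he)
      · by_cases hea : e = (a, c)
        · subst hea; exact hneg _ (by simp at he; linarith)
        · exact hneg e (by simpa [hea] using he)
      · rw [netOut_add, hdiv, netOut_single hmem]; ring
    · refine ⟨h - Pi.single (c, a) 1, fun e he => ?_, fun e he => ?_, fun v => ?_⟩
      · by_cases hea : e = (c, a)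
        · subst hea; exact hpos _ (by simp at he; linarith)
        · exact hpos e (by simpa [hea] using he)
      · by_cases hea : e = (c, a)
        · exact hea ▸ ⟨hmem, hflow⟩
        · exact hneg e (by simpa [hea] using he)
      · rw [sub_eq_add_neg, ← neg_one_smul ℝ, netOut_add, netOut_smul, hdiv, netOut_single hmem]
        ring

lemma exists_pos_add_smul_mem_Icc (hf : IsFlow E w s t f) {h : V × V → ℝ}
    (hpos : ∀ e, 0 < h e → f e < w e) (hneg : ∀ e, h e < 0 → 0 < f e) :
    ∃ ε > 0, ∀ e ∈ E, f e + ε * h e ∈ Set.Icc 0 (w e) := by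
  have hnear : ∀ e ∈ E,
      ∀ᶠ ε in nhdsWithin (0 : ℝ) (Set.Ioi 0), f e + ε * h e ∈ Set.Icc 0 (w e) := by
    intro e he
    have hlim : Filter.Tendsto (fun ε : ℝ => f e + ε * h e) (nhdsWithin 0 (Set.Ioi 0))
        (nhds (f e)) :=
      ((continuous_const.add (continuous_id.mul continuous_const)).tendsto' 0 (f e)
        (by simp)).mono_left nhdsWithin_le_nhds
    have hfe := hf.nonneg e he
    have hfw := hf.le_cap e he
    rcases lt_trichotomy (h e) 0 with hlt | heq | hgt
    · filter_upwards [hlim.eventually (lt_mem_nhds (hneg e hlt)), self_mem_nhdsWithin]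
        with ε hε (hε0 : 0 < ε)
      exact ⟨hε.le, by nlinarith⟩
    · exact Filter.Eventually.of_forall fun ε => by simp [heq, hfe, hfw]
    · filter_upwards [hlim.eventually (gt_mem_nhds (hpos e hgt)), self_mem_nhdsWithin]
        with ε hε (hε0 : 0 < ε)
      exact ⟨by nlinarith, hε.le⟩
  obtain ⟨ε, hε, hmem⟩ := (((Finset.eventually_all E).2 hnear).and self_mem_nhdsWithin).exists
  exact ⟨ε, hmem, hε⟩

lemma IsFlow.exists_flowValue_lt_of_reachable (hst : s ≠ t) (hf : IsFlow E w s t f)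
    (hr : Relation.ReflTransGen (Residual E w f) s t) :
    ∃ g, IsFlow E w s t g ∧ flowValue E s f < flowValue E s g := by
  obtain ⟨h, hpos, hneg, hdiv⟩ := exists_augmentingDirection hr
  obtain ⟨ε, hε, hcap⟩ :=
    exists_pos_add_smul_mem_Icc hf (fun e he => (hpos e he).2) (fun e he => (hneg e he).2)
  have hsupp : ∀ e ∉ E, h e = 0 := fun e he => by
    by_contra hne
    rcases lt_or_gt_of_ne hne with hlt | hgt
    exacts [he (hneg e hlt).1, he (hpos e hgt).1]
  have hnet : ∀ v, netOut E (f + ε • h) v =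
      netOut E f v + ε * ((if s = v then 1 else 0) - (if t = v then 1 else 0)) := fun v => by
    rw [netOut_add, netOut_smul, hdiv]
  refine ⟨f + ε • h, ⟨fun e he => (hcap e he).1, fun e he => (hcap e he).2,
    fun e he => by simp [hf.support e he, hsupp e he], fun v hvs hvt => sub_eq_zero.1 ?_⟩, ?_⟩
  · change netOut E (f + ε • h) v = 0
    rw [hnet, hf.netOut_eq_zero hvs hvt, if_neg hvs.symm, if_neg hvt.symm]
    ring
  · change netOut E f s < netOut E (f + ε • h) s
    rw [hnet, if_pos rfl, if_neg hst.symm]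
    linarith

lemma isClosed_setOf_isFlow (E : Finset (V × V)) (w : V × V → ℝ) (s t : V) :
    IsClosed {f | IsFlow E w s t f} := by
  have hflow : {f | IsFlow E w s t f} = {f | ∀ e ∈ E, 0 ≤ f e} ∩ {f | ∀ e ∈ E, f e ≤ w e} ∩
      {f | ∀ e, e ∉ E → f e = 0} ∩ {f | ∀ v, v ≠ s → v ≠ t → netOut E f v = 0} := by
    ext f
    simp only [Set.mem_ofPred_eq, Set.mem_inter_iff, netOut, sub_eq_zero]
    exact ⟨fun h => ⟨⟨⟨h.nonneg, h.le_cap⟩, h.support⟩, h.conserve⟩,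
      fun ⟨⟨⟨a, b⟩, c⟩, d⟩ => ⟨a, b, c, d⟩⟩
  have hnet : ∀ v, Continuous fun f : V × V → ℝ => netOut E f v := fun v => by
    unfold netOut; fun_prop
  rw [hflow]
  simp only [Set.ofPred_forall]
  refine ((IsClosed.inter ?_ ?_).inter ?_).inter ?_ <;>
    refine isClosed_iInter fun _ => isClosed_iInter fun _ => ?_
  · exact isClosed_le continuous_const (continuous_apply _)
  · exact isClosed_le (continuous_apply _) continuous_const
  · exact isClosed_eq (continuous_apply _) continuous_const
  · exact isClosed_iInter fun _ => isClosed_eq (hnet _) continuous_const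

lemma exists_isMaxFlow (E : Finset (V × V)) (w : V × V → ℝ) (s t : V) (hw : ∀ e ∈ E, 0 ≤ w e) :
    ∃ f, IsMaxFlow E w s t f := by
  have hzero : IsFlow E w s t 0 := ⟨fun _ _ => le_rfl, hw, fun _ _ => rfl, fun _ _ _ => by simp⟩
  have hbdd : {f | IsFlow E w s t f} ⊆ Set.Icc 0 (fun e => max (w e) 0) := fun f hf => by
    refine ⟨fun e => ?_, fun e => ?_⟩ <;> by_cases he : e ∈ E
    · exact hf.nonneg e he
    · exact (hf.support e he).ge
    · exact le_max_of_le_left (hf.le_cap e he)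
    · exact (hf.support e he).trans_le (le_max_right _ _)
  have hcpt := isCompact_Icc.of_isClosed_subset (isClosed_setOf_isFlow E w s t) hbdd
  have hcont : Continuous (flowValue E s) := by unfold flowValue; fun_prop
  obtain ⟨f, hf, hmax⟩ := hcpt.exists_isMaxOn ⟨0, hzero⟩ hcont.continuousOn
  exact ⟨f, hf, fun g hg => hmax hg⟩

end Network

section MinCut

variable {E : Finset (V × V)} {w : V × V → ℝ} {s t : V}

/-- The witness is the set of vertices reachable from `s` in the residual graph. -/
lemma IsMaxFlow.exists_isCut_flowValue_eq_cutCap (hst : s ≠ t) {f : V × V → ℝ}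
    (hf : IsMaxFlow E w s t f) : ∃ C, IsCut s t C ∧ flowValue E s f = cutCap E w C := by
  classical
  set C := Finset.univ.filter (Relation.ReflTransGen (Residual E w f) s)
  have hmem : ∀ v, v ∈ C ↔ Relation.ReflTransGen (Residual E w f) s v := by simp [C]
  have hcut : IsCut s t C := by
    refine ⟨(hmem s).2 .refl, fun ht => ?_⟩
    obtain ⟨g, hg, hlt⟩ := hf.1.exists_flowValue_lt_of_reachable hst ((hmem t).1 ht)
    exact (hf.2 g hg).not_gt hlt
  refine ⟨C, hcut, (hf.1.flowValue_eq_cutCap_iff hcut).2 ⟨fun e he hc => ?_, fun e he h1 h2 => ?_⟩⟩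
  · refine (hf.1.le_cap e he).eq_of_not_lt fun hlt => hc.2 ((hmem _).2 ?_)
    exact .tail ((hmem _).1 hc.1) (.inl ⟨he, hlt⟩)
  · refine ((hf.1.nonneg e he).eq_of_not_lt fun hlt => h1 ((hmem _).2 ?_)).symm
    exact .tail ((hmem _).1 h2) (.inr ⟨he, hlt⟩)

lemma exists_isFlow_flowValue_eq_cutCap (hst : s ≠ t) (hw : ∀ e ∈ E, 0 ≤ w e) {C : Finset V}
    (hC : IsCut s t C) (hmin : ∀ C', IsCut s t C' → cutCap E w C ≤ cutCap E w C') :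
    ∃ f, IsFlow E w s t f ∧ flowValue E s f = cutCap E w C := by
  obtain ⟨f, hf⟩ := exists_isMaxFlow E w s t hw
  obtain ⟨C₀, hC₀, hfC₀⟩ := hf.exists_isCut_flowValue_eq_cutCap hst
  exact ⟨f, hf.1, (hf.1.flowValue_le_cutCap hC).antisymm (hfC₀ ▸ hmin C₀ hC₀)⟩

lemma finite_cutCaps (E : Finset (V × V)) (w : V × V → ℝ) (s t : V) :
    {x | ∃ C : Finset V, IsCut s t C ∧ cutCap E w C = x}.Finite :=
  (Set.finite_range (cutCap E w)).subset fun _ ⟨C, _, hC⟩ => ⟨C, hC⟩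

lemma minCutCap_le_cutCap {C : Finset V} (hC : IsCut s t C) :
    minCutCap E w s t ≤ cutCap E w C :=
  csInf_le (finite_cutCaps E w s t).bddBelow ⟨C, hC, rfl⟩

lemma exists_cutCap_eq_minCutCap (E : Finset (V × V)) (w : V × V → ℝ) (hst : s ≠ t) :
    ∃ C, IsCut s t C ∧ cutCap E w C = minCutCap E w s t := by
  have hs : IsCut s t {s} := ⟨Finset.mem_singleton_self s, by simpa using hst.symm⟩
  have hne : {x | ∃ C : Finset V, IsCut s t C ∧ cutCap E w C = x}.Nonempty := ⟨_, {s}, hs, rfl⟩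
  exact hne.csInf_mem (finite_cutCaps E w s t)

lemma IsFlow.flowValue_le_minCutCap (hst : s ≠ t) {f : V × V → ℝ} (hf : IsFlow E w s t f) :
    flowValue E s f ≤ minCutCap E w s t := by
  obtain ⟨C, hC, hcap⟩ := exists_cutCap_eq_minCutCap E w hst
  exact hcap ▸ hf.flowValue_le_cutCap hC

lemma Vital.cutCap_sub_lt_minCutCap {e : V × V} (hst : s ≠ t) (hvit : Vital E w s t e)
    {C : Finset V} (hC : IsMincutFor E w s t e C) :
    cutCap E w C - w e < minCutCap E w s t := by
  obtain ⟨D, hD, hDmin⟩ := exists_cutCap_eq_minCutCap (E.erase e) w hst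
  have hDe : Contributes e D := by
    by_contra hnc
    rw [cutCap_erase hvit.1, if_neg hnc, sub_zero] at hDmin
    linarith [hvit.2, minCutCap_le_cutCap (E := E) (w := w) hD]
  rw [cutCap_erase hvit.1, if_pos hDe] at hDmin
  linarith [hC.2.2 D hD hDe, hvit.2]

end MinCut

/-- every contributing edge of a mincut for a vital edge `e`, other than `e` itself,
is saturated in some maximum (s,t)-flow (i.e. `e` is the only possible loose edge). -/
theorem at_most_one_loose_edge_in_mincut (E : Finset (V × V)) (w : V × V → ℝ) (s t : V)
    (hst : s ≠ t) (hpos : ∀ e ∈ E, 0 < w e) (e : V × V)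
    (hvit : Vital E w s t e) (C : Finset V) (hC : IsMincutFor E w s t e C) :
    ∀ e' ∈ E, Contributes e' C → e' ≠ e →
      ∃ f, IsMaxFlow E w s t f ∧ f e' = w e' := by
  intro e' he' hce' hne
  set M := minCutCap E w s t
  have hCM : M ≤ cutCap E w C := minCutCap_le_cutCap hC.1
  have hCe : cutCap E w C - w e < M := hvit.cutCap_sub_lt_minCutCap hst hC
  set w' := Function.update w e (M - (cutCap E w C - w e))
  have hw'w : ∀ a ∈ E, w' a ≤ w a := fun a _ => by
    rcases eq_or_ne a e with rfl | hae
    · simpa [w'] using hCM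
    · simp [w', hae]
  have hw' : ∀ a ∈ E, 0 ≤ w' a := fun a ha => by
    rcases eq_or_ne a e with rfl | hae
    · simpa [w'] using hCe.le
    · simpa [w', hae] using (hpos a ha).le
  have hcap' : ∀ C',
      cutCap E w' C' = cutCap E w C' + if Contributes e C' then M - cutCap E w C else 0 :=
    fun C' => by rw [cutCap_update hvit.1]; ring_nf
  have hw'C : cutCap E w' C = M := by rw [hcap', if_pos hC.2.1]; ring
  have hmin' : ∀ C', IsCut s t C' → cutCap E w' C ≤ cutCap E w' C' := by
    intro C' hC'
    rw [hw'C, hcap']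
    split_ifs with hc
    · linarith [hC.2.2 C' hC' hc]
    · linarith [minCutCap_le_cutCap (E := E) (w := w) hC']
  obtain ⟨f, hf, hfC⟩ := exists_isFlow_flowValue_eq_cutCap hst hw' hC.1 hmin'
  refine ⟨f, ⟨hf.mono hw'w, fun g hg => ?_⟩, ?_⟩
  · exact hfC ▸ hw'C ▸ hg.flowValue_le_minCutCap hst
  · simpa [w', hne] using ((hf.flowValue_eq_cutCap_iff hC.1).1 hfC).1 e' he' hce'
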